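/- Let x ∈ ℂ with x not lying in the real segment [−2, 2] (viewed inside ℂ), and set λ = (x/2)(1 + √(1 − 4/x²)), where √ denotes the principal complex square root. Then λ ≠ 0, λ + λ⁻¹ = x, λ − λ⁻¹ = x·√(1 − 4/x²), and |λ| > 1. -/

import Mathlib

/-- The principal complex square root: the branch with nonnegative real part. -/
noncomputable def csqrt (w : ℂ) : ℂ := w ^ ((1 : ℂ) / 2)

/-!
With `s = √(1 - 4/x²)`, the numbers `λ = (x/2)(1 + s)` and `μ = (x/2)(1 - s)` satisfy
`λμ = (x²/4)(1 - s²) = 1`, so `μ = λ⁻¹` and both identities follow. Since `Re s ≥ 0`,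
`|1 - s| ≤ |1 + s|`, hence `|λ⁻¹| ≤ |λ|` and `|λ| ≥ 1`. Equality `|λ| = 1` would give
`λ⁻¹ = conj λ` and `x = λ + λ⁻¹ = 2 Re λ ∈ [-2, 2]`.
-/

open Complex

lemma csqrt_sq (w : ℂ) : csqrt w ^ 2 = w := by
  rw [csqrt, one_div]
  exact cpow_ofNat_inv_pow w 2

lemma re_csqrt_nonneg (w : ℂ) : 0 ≤ (csqrt w).re := by
  rw [csqrt, one_div, cpow_inv_two_re]
  exact Real.sqrt_nonneg _

lemma norm_one_sub_le_norm_one_add {s : ℂ} (hs : 0 ≤ s.re) : ‖1 - s‖ ≤ ‖1 + s‖ := by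
  rw [← sq_le_sq₀ (norm_nonneg _) (norm_nonneg _), ← normSq_eq_norm_sq, ← normSq_eq_norm_sq,
    normSq_apply, normSq_apply]
  simp only [sub_re, sub_im, add_re, add_im, one_re, one_im]
  nlinarith

lemma half_mul_one_add_csqrt_mul_half_mul_one_sub_csqrt {x : ℂ} (hx : x ≠ 0) :
    x / 2 * (1 + csqrt (1 - 4 / x ^ 2)) * (x / 2 * (1 - csqrt (1 - 4 / x ^ 2))) = 1 := by
  calc _ = x ^ 2 / 4 * (1 - csqrt (1 - 4 / x ^ 2) ^ 2) := by ring
    _ = 1 := by rw [csqrt_sq]; field_simp; ring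

lemma add_inv_mem_Icc_of_norm_eq_one {z : ℂ} (hz : ‖z‖ = 1) :
    z + z⁻¹ ∈ (fun r : ℝ => (r : ℂ)) '' Set.Icc (-2 : ℝ) 2 := by
  have hre := abs_le.mp (hz ▸ abs_re_le_norm z)
  exact ⟨2 * z.re, ⟨by linarith, by linarith⟩, by rw [inv_eq_conj hz, add_conj]⟩

lemma one_lt_norm_of_norm_inv_le {z : ℂ} (hz0 : z ≠ 0) (hle : ‖z⁻¹‖ ≤ ‖z‖)
    (hz : z + z⁻¹ ∉ (fun r : ℝ => (r : ℂ)) '' Set.Icc (-2 : ℝ) 2) : 1 < ‖z‖ := by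
  have hpos : 0 < ‖z‖ := norm_pos_iff.mpr hz0
  have hone : 1 ≤ ‖z‖ := by
    rw [norm_inv, inv_le_iff_one_le_mul₀ hpos] at hle
    nlinarith
  exact hone.lt_of_ne fun h => hz (add_inv_mem_Icc_of_norm_eq_one h.symm)

/-- for `x ∈ ℂ` not in the real segment `[−2,2]`, setting
`λ = (x/2)(1 + √(1 − 4/x²))` one has `λ ≠ 0`, `λ + λ⁻¹ = x`,
`λ − λ⁻¹ = x·√(1 − 4/x²)` and `|λ| > 1`. -/
theorem lam_of_trace (x : ℂ) (hx : x ∉ (fun r : ℝ => (r : ℂ)) '' Set.Icc (-2 : ℝ) 2)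
    (lam : ℂ) (hlam : lam = (x / 2) * (1 + csqrt (1 - 4 / x ^ 2))) :
    lam ≠ 0 ∧ lam + lam⁻¹ = x ∧ lam - lam⁻¹ = x * csqrt (1 - 4 / x ^ 2) ∧
      1 < ‖lam‖ := by
  have hx0 : x ≠ 0 := fun h => hx ⟨0, ⟨by norm_num, by norm_num⟩, by simp [h]⟩
  set s := csqrt (1 - 4 / x ^ 2)
  have hmul : lam * (x / 2 * (1 - s)) = 1 :=
    hlam ▸ half_mul_one_add_csqrt_mul_half_mul_one_sub_csqrt hx0
  have hlam0 : lam ≠ 0 := left_ne_zero_of_mul_eq_one hmul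
  have hinv : lam⁻¹ = x / 2 * (1 - s) := inv_eq_of_mul_eq_one_right hmul
  have hsum : lam + lam⁻¹ = x := by rw [hinv, hlam]; ring
  have hle : ‖lam⁻¹‖ ≤ ‖lam‖ := by
    rw [hinv, hlam, norm_mul, norm_mul]
    gcongr
    exact norm_one_sub_le_norm_one_add (re_csqrt_nonneg _)
  exact ⟨hlam0, hsum, by rw [hinv, hlam]; ring, one_lt_norm_of_norm_inv_le hlam0 hle (hsum ▸ hx)⟩
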